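/- Let v ∈ ℝ² be nonzero and let v_⊥ ∈ ℝ² satisfy v^⊤ v_⊥ = 0 and ‖v_⊥‖ = ‖v‖. Let W be a 2×2 real matrix, let μ_t, σ' ∈ ℝ, and let ε₀, ε₁ be independent standard real Gaussians. Then E[(S(μ_t v^⊤ e + σ' v^⊤(v ε₀ + v_⊥ ε₁)) − 1) · (μ_t W e + σ' W (v ε₀ + v_⊥ ε₁))] = λ₁ · W e + λ₂ · W v, where λ₁ = μ_t · E[S(μ_t v^⊤ e + σ' ‖v‖² ε₀) − 1] and λ₂ = σ' · E[(S(μ_t v^⊤ e + σ' ‖v‖² ε₀) − 1) ε₀]. -/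

import Mathlib

open MeasureTheory ProbabilityTheory Matrix RealInnerProductSpace

/-!
Since `vᵀ v⊥ = 0`, the sigmoid factor depends on `ε₀` only, through `σ' ‖v‖² ε₀`. Expanding
`W (v ε₀ + v⊥ ε₁)`, the `ε₁`-term is a function of `ε₀` times `ε₁`, whose expectation vanishes by
independence and `E ε₁ = 0`; what is left is a one-dimensional Gaussian expectation in `ε₀`.
-/

/-- The logistic sigmoid `S(t) = 1/(1 + exp(-t))`. -/
noncomputable def S (t : ℝ) : ℝ := 1 / (1 + Real.exp (-t))

/-- The unit vector `e = (1/√2)(1,1)ᵀ`. -/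
noncomputable def e : Fin 2 → ℝ := fun _ => 1 / Real.sqrt 2

/-- `e` as an element of Euclidean space `ℝ²`. -/
noncomputable def eE : EuclideanSpace ℝ (Fin 2) := (WithLp.equiv 2 (Fin 2 → ℝ)).symm e

/-- The standard Gaussian measure on `ℝ`. -/
noncomputable def γ : Measure ℝ := gaussianReal 0 1

/-- The law of a pair `(ε₀, ε₁)` of independent standard Gaussians. -/
noncomputable def γ2 : Measure (ℝ × ℝ) := γ.prod γ

lemma S_pos (t : ℝ) : 0 < S t := by unfold S; positivity

lemma S_le_one (t : ℝ) : S t ≤ 1 := by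
  unfold S
  rw [div_le_one (by positivity)]
  linarith [Real.exp_pos (-t)]

lemma abs_S_sub_one_le (t : ℝ) : |S t - 1| ≤ 1 := by
  rw [abs_le]
  constructor <;> linarith [S_pos t, S_le_one t]

@[fun_prop]
lemma continuous_S : Continuous S :=
  continuous_const.div (continuous_const.add (Real.continuous_exp.comp continuous_neg))
    fun t => by positivity

instance : IsProbabilityMeasure γ := inferInstanceAs (IsProbabilityMeasure (gaussianReal 0 1))

lemma integral_prod_add_mul_snd {α : Type*} [MeasurableSpace α] {μ : Measure α} [SFinite μ]
    {ν : Measure ℝ} [IsProbabilityMeasure ν] {f g : α → ℝ} (hf : Integrable f μ)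
    (hg : Integrable g μ) (hν : Integrable (fun y : ℝ => y) ν) (hν₀ : ∫ y, y ∂ν = 0) :
    ∫ p, (g p.1 + f p.1 * p.2) ∂μ.prod ν = ∫ x, g x ∂μ := by
  rw [integral_add (hg.comp_fst ν) (hf.mul_prod hν), integral_fun_fst,
    integral_prod_mul f (fun y => y), hν₀]
  simp

lemma inner_smul_add_smul_of_inner_eq_zero {E : Type*} [NormedAddCommGroup E]
    [InnerProductSpace ℝ E] {v w : E} (h : ⟪v, w⟫ = 0) (x y : ℝ) :
    ⟪v, x • v + y • w⟫ = x * ‖v‖ ^ 2 := by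
  rw [inner_add_right, real_inner_smul_right, real_inner_smul_right, h,
    real_inner_self_eq_norm_sq, mul_zero, add_zero]

theorem stmt5_general (v vperp : EuclideanSpace ℝ (Fin 2))
    (horth : ⟪v, vperp⟫ = 0)
    (W : Matrix (Fin 2) (Fin 2) ℝ) (μt σ' : ℝ)
    (l₁ l₂ : ℝ)
    (hl₁ : l₁ = μt * ∫ z, (S (μt * ⟪v, eE⟫ + σ' * ‖v‖ ^ 2 * z) - 1) ∂γ)
    (hl₂ : l₂ = σ' * ∫ z, (S (μt * ⟪v, eE⟫ + σ' * ‖v‖ ^ 2 * z) - 1) * z ∂γ) :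
    ∀ i : Fin 2,
      (∫ p : ℝ × ℝ,
          (S (μt * ⟪v, eE⟫ + σ' * ⟪v, p.1 • v + p.2 • vperp⟫) - 1) *
            (μt * (W *ᵥ e) i + σ' * (W *ᵥ fun j => (p.1 • v + p.2 • vperp) j) i) ∂γ2)
        = l₁ * (W *ᵥ e) i + l₂ * (W *ᵥ fun j => v j) i := by
  intro i
  have hid : Integrable (fun z : ℝ => z) γ :=
    memLp_one_iff_integrable.mp (memLp_id_gaussianReal 1)
  set F : ℝ → ℝ := fun z => S (μt * ⟪v, eE⟫ + σ' * ‖v‖ ^ 2 * z) - 1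
  have hF_meas : AEStronglyMeasurable F γ := by unfold F; fun_prop
  have hF_bound : ∀ᵐ z ∂γ, ‖F z‖ ≤ 1 := ae_of_all _ fun z => abs_S_sub_one_le _
  have hF : Integrable F γ := .of_bound hF_meas 1 hF_bound
  have hFid : Integrable (fun z => F z * z) γ := hid.bdd_mul hF_meas hF_bound
  have h_integrand : ∀ p : ℝ × ℝ,
      (S (μt * ⟪v, eE⟫ + σ' * ⟪v, p.1 • v + p.2 • vperp⟫) - 1) *
          (μt * (W *ᵥ e) i + σ' * (W *ᵥ fun j => (p.1 • v + p.2 • vperp) j) i) =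
        (μt * (W *ᵥ e) i * F p.1 + σ' * (W *ᵥ fun j => v j) i * (F p.1 * p.1)) +
          σ' * (W *ᵥ fun j => vperp j) i * F p.1 * p.2 := by
    intro p
    have hW : (W *ᵥ fun j => (p.1 • v + p.2 • vperp) j) =
        p.1 • (W *ᵥ fun j => v j) + p.2 • (W *ᵥ fun j => vperp j) := by
      rw [← mulVec_smul, ← mulVec_smul, ← mulVec_add]; rfl
    have hS : σ' * ⟪v, p.1 • v + p.2 • vperp⟫ = σ' * ‖v‖ ^ 2 * p.1 := by
      rw [inner_smul_add_smul_of_inner_eq_zero horth]; ring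
    simp only [F, hS, hW, Pi.add_apply, Pi.smul_apply, smul_eq_mul]
    ring
  rw [γ2, integral_congr_ae (ae_of_all _ h_integrand),
    integral_prod_add_mul_snd (f := fun x => σ' * (W *ᵥ fun j => vperp j) i * F x)
      (g := fun x => μt * (W *ᵥ e) i * F x + σ' * (W *ᵥ fun j => v j) i * (F x * x))
      (hF.const_mul _) ((hF.const_mul _).add (hFid.const_mul _)) hid integral_id_gaussianReal,
    integral_add (hF.const_mul _) (hFid.const_mul _), integral_const_mul, integral_const_mul,
    hl₁, hl₂]
  simp only [F]
  ring

/-- Let `v ∈ ℝ²` be nonzero and `v⊥ ∈ ℝ²` with `vᵀ v⊥ = 0` and `‖v⊥‖ = ‖v‖`.  For a 2×2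
matrix `W`, reals `μₜ, σ'`, and independent standard Gaussians `ε₀, ε₁`, the expectation
`E[(S(μₜ vᵀe + σ' vᵀ(v ε₀ + v⊥ ε₁)) - 1) ⬝ (μₜ W e + σ' W (v ε₀ + v⊥ ε₁))]`
equals `λ₁ W e + λ₂ W v`, where `λ₁ = μₜ E[S(μₜ vᵀe + σ' ‖v‖² ε₀) - 1]` and
`λ₂ = σ' E[(S(μₜ vᵀe + σ' ‖v‖² ε₀) - 1) ε₀]`. -/
theorem stmt5 (v vperp : EuclideanSpace ℝ (Fin 2)) (hv : v ≠ 0)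
    (horth : ⟪v, vperp⟫ = 0) (hnorm : ‖vperp‖ = ‖v‖)
    (W : Matrix (Fin 2) (Fin 2) ℝ) (μt σ' : ℝ)
    (l₁ l₂ : ℝ)
    (hl₁ : l₁ = μt * ∫ z, (S (μt * ⟪v, eE⟫ + σ' * ‖v‖ ^ 2 * z) - 1) ∂γ)
    (hl₂ : l₂ = σ' * ∫ z, (S (μt * ⟪v, eE⟫ + σ' * ‖v‖ ^ 2 * z) - 1) * z ∂γ) :
    ∀ i : Fin 2,
      (∫ p : ℝ × ℝ,
          (S (μt * ⟪v, eE⟫ + σ' * ⟪v, p.1 • v + p.2 • vperp⟫) - 1) *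
            (μt * (W *ᵥ e) i + σ' * (W *ᵥ fun j => (p.1 • v + p.2 • vperp) j) i) ∂γ2)
        = l₁ * (W *ᵥ e) i + l₂ * (W *ᵥ fun j => v j) i :=
  stmt5_general v vperp horth W μt σ' l₁ l₂ hl₁ hl₂
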